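/- Let ψ ∈ ℂ^D be a unit vector, ρ := |ψ⟩⟨ψ| the associated rank-one projection, and H ∈ M_D(ℂ) Hermitian. Then ‖[H,ρ]‖₁² = 4·(⟨ψ, H²ψ⟩ − ⟨ψ, Hψ⟩²), where [H,ρ] := Hρ − ρH and ‖A‖₁ := tr√(A†A) is the trace norm (note ⟨ψ, Hψ⟩ and ⟨ψ, H²ψ⟩ are real). -/

import Mathlib

/-
Put `a = ⟨ψ, Hψ⟩` (real, as `H` is Hermitian) and `φ = Hψ - aψ`, so that `φ ⊥ ψ` and
`‖φ‖² = ⟨ψ, H²ψ⟩ - a²`. The shift by `aψ` cancels in the commutator, so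
`[H, ρ] = |φ⟩⟨ψ| - |ψ⟩⟨φ|`, and orthogonality gives
`[H, ρ]†[H, ρ] = ‖φ‖² |ψ⟩⟨ψ| + |φ⟩⟨φ|`. Its positive square root is
`‖φ‖ |ψ⟩⟨ψ| + ‖φ‖⁻¹ |φ⟩⟨φ|`, whose trace is `2‖φ‖`.
-/

open Matrix
open scoped ComplexOrder

noncomputable section

namespace Paper

open Classical in
/-- The square root of a positive semidefinite matrix (junk value `0` otherwise). -/
def msqrt {n : Type*} [Fintype n] [DecidableEq n] (A : Matrix n n ℂ) : Matrix n n ℂ :=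
  if hA : A.PosSemidef then
    (hA.1.eigenvectorUnitary : Matrix n n ℂ) * diagonal ((↑) ∘ (√·) ∘ hA.1.eigenvalues) *
      (star hA.1.eigenvectorUnitary : Matrix n n ℂ)
  else 0

/-- The trace norm `‖A‖₁ = tr √(A†A)` of a matrix. -/
def traceNorm {n : Type*} [Fintype n] [DecidableEq n] (A : Matrix n n ℂ) : ℝ :=
  (Matrix.trace (msqrt (Aᴴ * A))).re

section

variable {n : Type*} [Fintype n]

theorem star_dotProduct_self_eq_ofReal_sum (v : n → ℂ) :
    star v ⬝ᵥ v = ((∑ i, ‖v i‖ ^ 2 : ℝ) : ℂ) := by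
  push_cast
  simp [dotProduct, Complex.conj_mul']

theorem conjTranspose_mul_self_vecMulVec_sub {ψ φ : n → ℂ} (hψ : star ψ ⬝ᵥ ψ = 1)
    (hψφ : star ψ ⬝ᵥ φ = 0) :
    (vecMulVec φ (star ψ) - vecMulVec ψ (star φ))ᴴ *
        (vecMulVec φ (star ψ) - vecMulVec ψ (star φ)) =
      (star φ ⬝ᵥ φ) • vecMulVec ψ (star ψ) + vecMulVec φ (star φ) := by
  have hφψ : star φ ⬝ᵥ ψ = 0 := by rw [star_dotProduct, hψφ, star_zero]
  simp only [conjTranspose_sub, conjTranspose_vecMulVec, star_star, sub_mul, mul_sub,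
    vecMulVec_mul_vecMulVec, hψ, hψφ, hφψ, zero_smul, vecMulVec_zero, one_smul, vecMulVec_smul]
  abel

section Hermitian

variable {H : Matrix n n ℂ}

def expectation (H : Matrix n n ℂ) (ψ : n → ℂ) : ℝ := (star ψ ⬝ᵥ H *ᵥ ψ).re

def deviation (H : Matrix n n ℂ) (ψ : n → ℂ) : n → ℂ := H *ᵥ ψ - (expectation H ψ : ℂ) • ψ

theorem ofReal_expectation (hH : H.IsHermitian) (ψ : n → ℂ) :
    (expectation H ψ : ℂ) = star ψ ⬝ᵥ H *ᵥ ψ :=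
  Complex.ext rfl (hH.im_star_dotProduct_mulVec_self ψ).symm

theorem star_dotProduct_deviation (hH : H.IsHermitian) {ψ : n → ℂ}
    (hψ : star ψ ⬝ᵥ ψ = 1) : star ψ ⬝ᵥ deviation H ψ = 0 := by
  rw [deviation, dotProduct_sub, dotProduct_smul, hψ, smul_eq_mul, mul_one,
    ofReal_expectation hH, sub_self]

theorem star_deviation_dotProduct_deviation (hH : H.IsHermitian) {ψ : n → ℂ}
    (hψ : star ψ ⬝ᵥ ψ = 1) :
    star (deviation H ψ) ⬝ᵥ deviation H ψ =
      star ψ ⬝ᵥ (H * H) *ᵥ ψ - (expectation H ψ : ℂ) ^ 2 := by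
  have hHψ : star (H *ᵥ ψ) ⬝ᵥ ψ = expectation H ψ := by
    rw [star_mulVec, ← dotProduct_mulVec, hH.eq, ofReal_expectation hH]
  rw [deviation, star_sub, star_smul, Complex.star_def, Complex.conj_ofReal]
  simp only [sub_dotProduct, dotProduct_sub, smul_dotProduct, dotProduct_smul, smul_eq_mul,
    hψ, hHψ]
  rw [star_mulVec, ← dotProduct_mulVec, hH.eq, mulVec_mulVec, ← ofReal_expectation hH]
  ring

theorem commutator_vecMulVec_star_self (hH : H.IsHermitian) (ψ : n → ℂ) :
    H * vecMulVec ψ (star ψ) - vecMulVec ψ (star ψ) * H =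
      vecMulVec (deviation H ψ) (star ψ) - vecMulVec ψ (star (deviation H ψ)) := by
  rw [mul_vecMulVec, vecMulVec_mul, deviation, star_sub, star_smul, Complex.star_def,
    Complex.conj_ofReal, star_mulVec, hH.eq, sub_vecMulVec, vecMulVec_sub, smul_vecMulVec,
    vecMulVec_smul]
  abel

end Hermitian

variable [DecidableEq n]

open MatrixOrder in
theorem msqrt_eq_of_mul_self_eq {A S : Matrix n n ℂ} (hS : S.PosSemidef) (h : S * S = A) :
    msqrt A = S := by
  have hA : A.PosSemidef := by
    simpa [← h, hS.1.eq] using posSemidef_conjTranspose_mul_self S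
  have hsqrt : CFC.sqrt A = S := CFC.sqrt_unique h hS.nonneg
  rw [msqrt, dif_pos hA, ← hsqrt, CFC.sqrt_eq_cfc, cfc_nnreal_eq_real _ A hA.nonneg, hA.1.cfc_eq,
    IsHermitian.cfc, Unitary.conjStarAlgAut_apply]
  congr 3
  funext i
  simp [Real.coe_sqrt, hA.eigenvalues_nonneg i]

theorem traceNorm_eq_re_trace_of_mul_self_eq {A S : Matrix n n ℂ} (hS : S.PosSemidef)
    (h : S * S = Aᴴ * A) : traceNorm A = (trace S).re := by
  rw [traceNorm, msqrt_eq_of_mul_self_eq hS h]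

theorem traceNorm_vecMulVec_sub {ψ φ : n → ℂ} (hψ : star ψ ⬝ᵥ ψ = 1) (hψφ : star ψ ⬝ᵥ φ = 0) :
    traceNorm (vecMulVec φ (star ψ) - vecMulVec ψ (star φ)) = 2 * √(star φ ⬝ᵥ φ).re := by
  have hφψ : star φ ⬝ᵥ ψ = 0 := by rw [star_dotProduct, hψφ, star_zero]
  set r := √(star φ ⬝ᵥ φ).re
  have hr : (r : ℂ) ^ 2 = star φ ⬝ᵥ φ := by
    have hφφ := dotProduct_star_self_nonneg φ
    rw [← Complex.ofReal_pow, Real.sq_sqrt (Complex.nonneg_iff.mp hφφ).1,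
      ← Complex.eq_re_of_ofReal_le hφφ]
  -- For `φ = 0` the junk value `0⁻¹ = 0` makes `S = 0`, which is still the right root.
  set S := (r : ℂ) • vecMulVec ψ (star ψ) + (r⁻¹ : ℂ) • vecMulVec φ (star φ)
  have hS : S.PosSemidef :=
    ((posSemidef_vecMulVec_self_star ψ).smul (by positivity)).add
      ((posSemidef_vecMulVec_self_star φ).smul (by positivity))
  have hφφ : ((r : ℂ)⁻¹ * (r : ℂ)⁻¹ * star φ ⬝ᵥ φ) • vecMulVec φ (star φ) =
      vecMulVec φ (star φ) := by
    rcases eq_or_ne φ 0 with rfl | hφ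
    · simp
    have hr0 : (r : ℂ) ≠ 0 := by
      rintro h
      rw [h, zero_pow two_ne_zero, eq_comm, dotProduct_star_self_eq_zero] at hr
      exact hφ hr
    rw [← hr]
    field_simp
    rw [one_smul]
  have hSS : S * S = (star φ ⬝ᵥ φ) • vecMulVec ψ (star ψ) + vecMulVec φ (star φ) := by
    simp only [S, add_mul, mul_add, smul_mul_smul_comm, vecMulVec_mul_vecMulVec, hψ, hψφ, hφψ,
      one_smul, zero_smul, vecMulVec_zero, vecMulVec_smul, smul_smul, smul_zero, add_zero,
      zero_add]
    rw [← sq, hr, hφφ]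
  rw [traceNorm_eq_re_trace_of_mul_self_eq hS
    (hSS.trans (conjTranspose_mul_self_vecMulVec_sub hψ hψφ).symm)]
  rw [trace_add, trace_smul, trace_smul, trace_vecMulVec, trace_vecMulVec, dotProduct_comm ψ,
    dotProduct_comm φ, hψ, ← hr, smul_eq_mul, smul_eq_mul, mul_one, sq, ← mul_assoc,
    inv_mul_mul_self, Complex.add_re, Complex.ofReal_re]
  ring

end

/-- for a unit vector `ψ`, `ρ = |ψ⟩⟨ψ|` and Hermitian `H`,
`‖[H,ρ]‖₁² = 4·(⟨ψ, H²ψ⟩ − ⟨ψ, Hψ⟩²)`. -/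
theorem traceNorm_commutator_sq_of_pure {D : ℕ} (ψ : Fin D → ℂ)
    (hψ : ∑ x, ‖ψ x‖ ^ 2 = 1) (H : Matrix (Fin D) (Fin D) ℂ) (hH : H.IsHermitian) :
    traceNorm (H * Matrix.vecMulVec ψ (star ψ) - Matrix.vecMulVec ψ (star ψ) * H) ^ 2 =
      4 * ((star ψ ⬝ᵥ ((H * H) *ᵥ ψ)).re - ((star ψ ⬝ᵥ (H *ᵥ ψ)).re) ^ 2) := by
  have hψ' : star ψ ⬝ᵥ ψ = 1 := by
    rw [star_dotProduct_self_eq_ofReal_sum, hψ, Complex.ofReal_one]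
  rw [commutator_vecMulVec_star_self hH,
    traceNorm_vecMulVec_sub hψ' (star_dotProduct_deviation hH hψ'), mul_pow,
    Real.sq_sqrt (Complex.nonneg_iff.mp (dotProduct_star_self_nonneg _)).1,
    star_deviation_dotProduct_deviation hH hψ', Complex.sub_re, ← Complex.ofReal_pow,
    Complex.ofReal_re]
  norm_num [expectation]

end Paper
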